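/- arXiv:1803.08749 — 6 statements merged into one kernel-verified Lean document; each statement's English description precedes it below -/
import Mathlib

section
/- For integers b ≥ 2, β₂ ∈ {1,2}, β₃ ∈ {1,3}, the integer 2·|12b − 6 − 4β₂ − 3β₃| is never a perfect square. -/
lemma aux_not_sq_two_odd (m : ℤ) (hm : Odd m) : ¬ IsSquare (2 * m) := by
  rintro ⟨r, hr⟩
  obtain ⟨k, hk⟩ := hm
  rcases Int.even_or_odd r with ⟨s, hs⟩ | ⟨s, hs⟩
  · subst hs
    have h4 : 2 * m = 4 * (s * s) := by linear_combination hr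
    generalize s * s = t at h4
    omega
  · subst hs
    have h4 : 2 * m = 4 * (s * s) + 4 * s + 1 := by linear_combination hr
    generalize s * s = t at h4
    omega

/-- The order `2·|12b − 6 − 4β₂ − 3β₃|` of the first homology of an octahedral-type
spherical 3-manifold is never a perfect square. -/
theorem octahedral_H1_not_square (b β₂ β₃ : ℤ) (hb : 2 ≤ b)
    (hβ₂ : β₂ = 1 ∨ β₂ = 2) (hβ₃ : β₃ = 1 ∨ β₃ = 3) :
    ¬ IsSquare (2 * |12 * b - 6 - 4 * β₂ - 3 * β₃|) := by
  rcases hβ₂ with h2 | h2 <;> rcases hβ₃ with h3 | h3 <;> subst h2 <;> subst h3 <;>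
    rw [abs_of_nonneg (by omega)] <;>
    exact aux_not_sq_two_odd _ (Int.odd_iff.mpr (by omega))
end

section
/- Let b ≥ 2, β₂ ∈ {1,2}, β₃ ∈ {1,2,3,4}. If the integer |30(b−2) + 45 − 10β₂ − 6β₃| is a perfect square, then (β₂,β₃) = (2,4) or (β₂,β₃) = (2,1). -/
private lemma no_sq_mod30 (n : ℤ) (hsq : IsSquare n)
    (h : ∀ x : ZMod 30, x * x ≠ (n : ZMod 30)) : False := by
  obtain ⟨k, hk⟩ := hsq
  exact h (k : ZMod 30) (by rw [hk]; push_cast; ring)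

/-- If the order `|30(b−2) + 45 − 10β₂ − 6β₃|` of the first homology of an icosahedral-type
spherical 3-manifold is a perfect square, then `(β₂,β₃) = (2,4)` or `(β₂,β₃) = (2,1)`. -/
theorem icosahedral_H1_square_cases (b β₂ β₃ : ℤ) (hb : 2 ≤ b)
    (hβ₂ : β₂ = 1 ∨ β₂ = 2) (hβ₃ : β₃ = 1 ∨ β₃ = 2 ∨ β₃ = 3 ∨ β₃ = 4)
    (hsq : IsSquare |30 * (b - 2) + 45 - 10 * β₂ - 6 * β₃|) :
    (β₂ = 2 ∧ β₃ = 4) ∨ (β₂ = 2 ∧ β₃ = 1) := by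
  rcases hβ₂ with h2 | h2 <;> rcases hβ₃ with h3 | h3 | h3 | h3 <;>
    subst h2 h3
  all_goals first
    | (left; exact ⟨rfl, rfl⟩)
    | (right; exact ⟨rfl, rfl⟩)
    | (exfalso
       rw [abs_of_nonneg (by linarith)] at hsq
       refine no_sq_mod30 _ hsq ?_
       have hb' : ∃ m : ℤ, b - 2 = m := ⟨b - 2, rfl⟩
       obtain ⟨m, hm⟩ := hb'
       rw [hm]
       intro x hx
       push_cast at hx
       rw [show (30 : ZMod 30) = 0 by decide, zero_mul, zero_add] at hx
       revert x hx
       decide)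
end

section
/- Let b ≥ 2, β₂ ∈ {1,2}, β₃ ∈ {1,2}. The integer 3·|6b − 3 − 2(β₂ + β₃)| is a perfect square only if {β₂,β₃} as a multiset contributes β₂ + β₃ = 3, i.e., one of β₂, β₃ equals 1 and the other equals 2. -/
lemma aux_not_sq (N : ℤ) (h : ¬ (3 ∣ N)) : ¬ IsSquare (3 * |N|) := by
  rintro ⟨k, hk⟩
  have hp : Prime (3 : ℤ) := Int.prime_three
  have h3 : (3 : ℤ) ∣ k := by
    have : (3 : ℤ) ∣ k * k := ⟨|N|, hk.symm⟩
    rcases (hp.dvd_mul).mp this with h | h <;> exact h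
  obtain ⟨m, rfl⟩ := h3
  have habs : |N| = 3 * (m * m) := by linarith [hk]
  have : (3 : ℤ) ∣ |N| := ⟨m * m, habs⟩
  exact h ((dvd_abs 3 N).mp this)

/-- If the order `3·|6b − 3 − 2(β₂+β₃)|` of the first homology of a tetrahedral-type
spherical 3-manifold is a perfect square, then one of `β₂, β₃` is `1` and the other is `2`
(i.e. `β₂ + β₃ = 3`). -/
theorem tetrahedral_H1_square_cases (b β₂ β₃ : ℤ) (hb : 2 ≤ b)
    (hβ₂ : β₂ = 1 ∨ β₂ = 2) (hβ₃ : β₃ = 1 ∨ β₃ = 2)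
    (hsq : IsSquare (3 * |6 * b - 3 - 2 * (β₂ + β₃)|)) :
    (β₂ = 1 ∧ β₃ = 2) ∨ (β₂ = 2 ∧ β₃ = 1) := by
  rcases hβ₂ with rfl | rfl <;> rcases hβ₃ with rfl | rfl
  · exact absurd hsq (aux_not_sq _ (by omega))
  · exact Or.inl ⟨rfl, rfl⟩
  · exact Or.inr ⟨rfl, rfl⟩
  · exact absurd hsq (aux_not_sq _ (by omega))
end

section
/- For every integer b ≥ 3, the Hirzebruch–Jung continued fraction [7, 2, ..., 2, 4, 2] (with b−3 twos between the 7 and the 4) equals (30b−43)/(5b−8), and [7, 2, ..., 2, 3, 3] (with b−3 twos) equals (30b−37)/(5b−7). -/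
/-- Hirzebruch–Jung continued fraction `[a₁,…,aₙ] = a₁ − 1/[a₂,…,aₙ]`, `[a] = a`. -/
def hjCF : List ℚ → ℚ
  | [] => 0
  | [a] => a
  | a :: b :: l => a - 1 / hjCF (b :: l)

lemma hjCF_cons (a : ℚ) (l : List ℚ) (hl : l ≠ []) :
    hjCF (a :: l) = a - 1 / hjCF l := by
  cases l with
  | nil => simp at hl
  | cons b t => rfl

lemma hjCF_rep4 (k : ℕ) :
    hjCF (List.replicate k (2 : ℚ) ++ [4, 2]) = (5 * k + 7) / (5 * k + 2) := by
  induction k with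
  | zero => norm_num [hjCF]
  | succ n ih =>
    rw [List.replicate_succ, List.cons_append, hjCF_cons _ _ (by simp), ih]
    have h1 : (5 * (n : ℚ) + 2) ≠ 0 := by positivity
    have h2 : (5 * (n : ℚ) + 7) ≠ 0 := by positivity
    push_cast
    field_simp
    ring

lemma hjCF_rep3 (k : ℕ) :
    hjCF (List.replicate k (2 : ℚ) ++ [3, 3]) = (5 * k + 8) / (5 * k + 3) := by
  induction k with
  | zero => norm_num [hjCF]
  | succ n ih =>
    rw [List.replicate_succ, List.cons_append, hjCF_cons _ _ (by simp), ih]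
    have h1 : (5 * (n : ℚ) + 3) ≠ 0 := by positivity
    have h2 : (5 * (n : ℚ) + 8) ≠ 0 := by positivity
    push_cast
    field_simp
    ring

/-- For `b ≥ 3`, `[7,2,…,2,4,2]` (with `b−3` twos) equals `(30b−43)/(5b−8)` and
`[7,2,…,2,3,3]` (with `b−3` twos) equals `(30b−37)/(5b−7)`. -/
theorem hj_I17_I23 (b : ℕ) (hb : 3 ≤ b) :
    hjCF ((7 : ℚ) :: (List.replicate (b - 3) (2 : ℚ) ++ [4, 2])) =
        (30 * (b : ℚ) - 43) / (5 * (b : ℚ) - 8) ∧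
    hjCF ((7 : ℚ) :: (List.replicate (b - 3) (2 : ℚ) ++ [3, 3])) =
        (30 * (b : ℚ) - 37) / (5 * (b : ℚ) - 7) := by
  obtain ⟨k, rfl⟩ : ∃ k, b = k + 3 := ⟨b - 3, by omega⟩
  have hk : k + 3 - 3 = k := by omega
  have hc : ((k + 3 : ℕ) : ℚ) = (k : ℚ) + 3 := by push_cast; ring
  have h1 : (5 * (k : ℚ) + 2) ≠ 0 := by positivity
  have h2 : (5 * (k : ℚ) + 7) ≠ 0 := by positivity
  have h3 : (5 * (k : ℚ) + 3) ≠ 0 := by positivity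
  have h4 : (5 * (k : ℚ) + 8) ≠ 0 := by positivity
  have h2' : (7 + (k : ℚ) * 5) ≠ 0 := by positivity
  have h4' : (8 + (k : ℚ) * 5) ≠ 0 := by positivity
  constructor
  · rw [hk, hjCF_cons _ _ (by simp), hjCF_rep4, hc, one_div_div]
    have e1 : (30 * ((k : ℚ) + 3) - 43) = 30 * k + 47 := by ring
    have e2 : (5 * ((k : ℚ) + 3) - 8) = 5 * k + 7 := by ring
    rw [e1, e2, eq_div_iff h2, sub_mul, div_mul_cancel₀ _ h2]
    ring
  · rw [hk, hjCF_cons _ _ (by simp), hjCF_rep3, hc, one_div_div]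
    have e1 : (30 * ((k : ℚ) + 3) - 37) = 30 * k + 53 := by ring
    have e2 : (5 * ((k : ℚ) + 3) - 7) = 5 * k + 8 := by ring
    rw [e1, e2, eq_div_iff h4, sub_mul, div_mul_cancel₀ _ h4]
    ring
end

section
/- Let p = (30k+23)², q = 150k² + 230k + 89 for an integer k with k ≠ 0 and k ≠ −1, m = |30k+23|, and i = 75k² + 115k + 44 + 2m. Then the lens space correction term satisfies d(L(p,q), i) = 6, where d is defined by the Ozsváth–Szabó recursion. -/
set_option maxRecDepth 10000


/-- The Ozsváth–Szabó recursion computing `d(−L(p,q), i)`: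
`d(−L(p,q),i) = (pq − (2i+1−p−q)²)/(4pq) − d(−L(q, p mod q), i mod q)`, `d(S³) = 0`. -/
def dNegLens (p q i : ℕ) : ℚ :=
  if h : q = 0 then 0
  else ((p : ℚ) * q - (2 * (i : ℚ) + 1 - p - q) ^ 2) / (4 * p * q)
        - dNegLens q (p % q) (i % q)
termination_by q
decreasing_by exact Nat.mod_lt _ (Nat.pos_of_ne_zero h)

/-- The lens space correction term `d(L(p,q), i) = −d(−L(p,q), i)`. -/
def dLens (p q i : ℕ) : ℚ := -dNegLens p q i

lemma d540 : dNegLens 5 4 0 = 1/5 := by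
  rw [dNegLens, dNegLens, dNegLens]; norm_num

lemma d543 : dNegLens 5 4 3 = 1/5 := by
  rw [dNegLens, dNegLens, dNegLens]; norm_num

lemma famA (n : ℕ) :
    dLens ((30*n+53)^2) (150*n^2+530*n+469) (75*n^2+325*n+340) = 6 := by
  obtain ⟨a, ha⟩ : ∃ a, a = n^2 := ⟨_, rfl⟩
  rw [show (30*n+53)^2 = 900*n^2+3180*n+2809 from by ring, ← ha]
  have hpq : (900*a+3180*n+2809) % (150*a+530*n+469) = 150*a+530*n+464 := by
    rw [show 900*a+3180*n+2809 = (150*a+530*n+464) + (150*a+530*n+469) * 5 from by ring,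
      Nat.add_mul_mod_self_left, Nat.mod_eq_of_lt (by omega)]
  have hiq : (75*a+325*n+340) % (150*a+530*n+469) = 75*a+325*n+340 :=
    Nat.mod_eq_of_lt (by omega)
  have hq2 : (150*a+530*n+469) % (150*a+530*n+464) = 5 := by
    rw [Nat.mod_eq_sub_mod (by omega),
      show (150*a+530*n+469) - (150*a+530*n+464) = 5 from by omega,
      Nat.mod_eq_of_lt (by omega)]
  have hiq2 : (75*a+325*n+340) % (150*a+530*n+464) = 75*a+325*n+340 :=
    Nat.mod_eq_of_lt (by omega)
  have h55 : (150*a+530*n+464) % 5 = 4 := by omega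
  have hi5 : (75*a+325*n+340) % 5 = 0 := by omega
  rw [dLens, dNegLens, dif_neg (by omega : ¬(150*a+530*n+469 = 0)), hpq, hiq,
    dNegLens, dif_neg (by omega : ¬(150*a+530*n+464 = 0)), hq2, hiq2,
    dNegLens, dif_neg (by norm_num : ¬((5:ℕ) = 0)), h55, hi5, d540]
  subst ha
  have hA : (900*(n:ℚ)^2+3180*n+2809) ≠ 0 := by positivity
  have hB : (150*(n:ℚ)^2+530*n+469) ≠ 0 := by positivity
  have hC : (150*(n:ℚ)^2+530*n+464) ≠ 0 := by positivity
  push_cast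
  field_simp
  ring

lemma famB (n : ℕ) :
    dLens ((30*n+37)^2) (150*n^2+370*n+229) (75*n^2+245*n+188) = 6 := by
  obtain ⟨a, ha⟩ : ∃ a, a = n^2 := ⟨_, rfl⟩
  rw [show (30*n+37)^2 = 900*n^2+2220*n+1369 from by ring, ← ha]
  have hpq : (900*a+2220*n+1369) % (150*a+370*n+229) = 150*a+370*n+224 := by
    rw [show 900*a+2220*n+1369 = (150*a+370*n+224) + (150*a+370*n+229) * 5 from by ring,
      Nat.add_mul_mod_self_left, Nat.mod_eq_of_lt (by omega)]
  have hiq : (75*a+245*n+188) % (150*a+370*n+229) = 75*a+245*n+188 :=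
    Nat.mod_eq_of_lt (by omega)
  have hq2 : (150*a+370*n+229) % (150*a+370*n+224) = 5 := by
    rw [Nat.mod_eq_sub_mod (by omega),
      show (150*a+370*n+229) - (150*a+370*n+224) = 5 from by omega,
      Nat.mod_eq_of_lt (by omega)]
  have hiq2 : (75*a+245*n+188) % (150*a+370*n+224) = 75*a+245*n+188 :=
    Nat.mod_eq_of_lt (by omega)
  have h55 : (150*a+370*n+224) % 5 = 4 := by omega
  have hi5 : (75*a+245*n+188) % 5 = 3 := by omega
  rw [dLens, dNegLens, dif_neg (by omega : ¬(150*a+370*n+229 = 0)), hpq, hiq,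
    dNegLens, dif_neg (by omega : ¬(150*a+370*n+224 = 0)), hq2, hiq2,
    dNegLens, dif_neg (by norm_num : ¬((5:ℕ) = 0)), h55, hi5, d543]
  subst ha
  have hA : (900*(n:ℚ)^2+2220*n+1369) ≠ 0 := by positivity
  have hB : (150*(n:ℚ)^2+370*n+229) ≠ 0 := by positivity
  have hC : (150*(n:ℚ)^2+370*n+224) ≠ 0 := by positivity
  push_cast
  field_simp
  ring

/-- For `p = (30k+23)²`, `q = 150k² + 230k + 89`, `m = |30k+23|`, `k ≠ 0, −1`, and
`i = 75k² + 115k + 44 + 2m`, the lens space correction term is `d(L(p,q), i) = 6`. -/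
theorem dLens_30k23 (k : ℤ) (hk0 : k ≠ 0) (hk1 : k ≠ -1) :
    dLens ((30 * k + 23) ^ 2).toNat (150 * k ^ 2 + 230 * k + 89).toNat
      (75 * k ^ 2 + 115 * k + 44 + 2 * |30 * k + 23|).toNat = 6 := by
  rcases le_or_gt 1 k with hk | hk
  · obtain ⟨n, hn⟩ : ∃ n : ℕ, k = (n:ℤ) + 1 := ⟨(k-1).toNat, by omega⟩
    subst hn
    have e1 : (30 * ((n:ℤ)+1) + 23) ^ 2 = (((30*n+53)^2 : ℕ) : ℤ) := by push_cast; ring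
    have e2 : 150 * ((n:ℤ)+1) ^ 2 + 230 * ((n:ℤ)+1) + 89
        = ((150*n^2+530*n+469 : ℕ) : ℤ) := by push_cast; ring
    have e3 : 75 * ((n:ℤ)+1) ^ 2 + 115 * ((n:ℤ)+1) + 44 + 2 * |30 * ((n:ℤ)+1) + 23|
        = ((75*n^2+325*n+340 : ℕ) : ℤ) := by
      rw [abs_of_nonneg (by omega)]; push_cast; ring
    rw [e1, e2, e3, Int.toNat_natCast, Int.toNat_natCast, Int.toNat_natCast]
    exact famA n
  · obtain ⟨n, hn⟩ : ∃ n : ℕ, k = -((n:ℤ) + 2) := ⟨(-k-2).toNat, by omega⟩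
    subst hn
    have e1 : (30 * (-((n:ℤ)+2)) + 23) ^ 2 = (((30*n+37)^2 : ℕ) : ℤ) := by push_cast; ring
    have e2 : 150 * (-((n:ℤ)+2)) ^ 2 + 230 * (-((n:ℤ)+2)) + 89
        = ((150*n^2+370*n+229 : ℕ) : ℤ) := by push_cast; ring
    have e3 : 75 * (-((n:ℤ)+2)) ^ 2 + 115 * (-((n:ℤ)+2)) + 44 + 2 * |30 * (-((n:ℤ)+2)) + 23|
        = ((75*n^2+245*n+188 : ℕ) : ℤ) := by
      rw [abs_of_nonpos (by omega)]; push_cast; ring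
    rw [e1, e2, e3, Int.toNat_natCast, Int.toNat_natCast, Int.toNat_natCast]
    exact famB n
end

section
/- Let G = (ℤ/p)^{2k} for p a square-free odd positive integer, with a nonsingular symmetric linking form λ, and let M ≤ G be a metabolizer (M = M^⊥). Then the sum over α ∈ M of (sum over i of f_i(α_i)) equals Σᵢ m^{k−1} Σ_{s ∈ ℤ/p} f_i(s), where α_i is the i-th coordinate of α and m = p: i.e., for each i, the projection M → ℤ/p onto the i-th coordinate is surjective with all fibers of equal cardinality |M|/p, so Σ_{α∈M} f(α_i) = (|M|/p) Σ_{s∈ℤ/p} f(s) for any function f : ℤ/p → ℚ. -/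
/-- Kim–Livingston averaging: let `p` be a square-free odd positive integer and
`M ≤ (ℤ/p)^{2k}` a metabolizer (`M = M^⊥`) of a nonsingular symmetric linking form which
is a direct sum of forms `aᵢxy/p` on the coordinates (encoded over `ℤ/p` via the units
`aᵢ`). Then each coordinate projection of `M` is surjective, and for any function
`f : ℤ/p → ℚ` and any coordinate `i`,
`Σ_{α∈M} f(αᵢ) = (|M|/p)·Σ_{s∈ℤ/p} f(s)`. -/
theorem metabolizer_coordinate_average (p : ℕ) [NeZero p] (hodd : Odd p)
    (hsf : Squarefree p) (k : ℕ) (hk : 0 < k)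
    (a : Fin (2 * k) → ZMod p) (ha : ∀ i, IsUnit (a i))
    (M : AddSubgroup (Fin (2 * k) → ZMod p))
    (hmet : ∀ x, x ∈ M ↔ ∀ y ∈ M, (∑ i, a i * x i * y i) = 0) :
    (∀ (i : Fin (2 * k)) (s : ZMod p), ∃ α ∈ M, α i = s) ∧
      ∀ (f : ZMod p → ℚ) (i : Fin (2 * k)),
        (∑ᶠ α ∈ (M : Set (Fin (2 * k) → ZMod p)), f (α i)) =
          ((Nat.card M : ℚ) / p) * ∑ s : ZMod p, f s := by
  classical
  have hp : 0 < p := Nat.pos_of_ne_zero (NeZero.ne p)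
  -- Part 1: surjectivity of each coordinate projection
  have hsurj : ∀ (i : Fin (2 * k)) (s : ZMod p), ∃ α ∈ M, α i = s := by
    intro i
    set H : AddSubgroup (ZMod p) :=
      M.map (Pi.evalAddMonoidHom (fun _ : Fin (2 * k) => ZMod p) i) with hH
    suffices htop : H = ⊤ by
      intro s
      have hs : s ∈ H := htop ▸ AddSubgroup.mem_top s
      rcases hs with ⟨α, hα, hαi⟩
      exact ⟨α, hα, hαi⟩
    by_contra hne
    set h := Nat.card H with hh
    have hdvd : h ∣ p := by
      have := AddSubgroup.card_addSubgroup_dvd_card H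
      rwa [Nat.card_zmod] at this
    have hhp : h ≠ p := by
      intro heq
      exact hne (AddSubgroup.eq_top_of_card_eq H (by rw [Nat.card_zmod]; exact heq))
    have hhpos : 0 < h := Nat.card_pos
    obtain ⟨m, hmeq⟩ := hdvd
    have hm1 : m ≠ 1 := by
      intro h1; rw [h1, mul_one] at hmeq; exact hhp hmeq.symm
    have hm0 : m ≠ 0 := by
      intro h0; rw [h0, mul_zero] at hmeq; omega
    set q := m.minFac with hq
    have hqprime : q.Prime := Nat.minFac_prime hm1
    have hqm : q ∣ m := Nat.minFac_dvd m
    -- write p = q * d with h ∣ d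
    obtain ⟨t0, ht0⟩ := hqm
    set d := h * t0 with hd
    have hpd : p = q * d := by rw [hmeq, ht0, hd]; ring
    have hdpos : 0 < d := by
      rcases Nat.eq_zero_or_pos d with h0 | h0
      · rw [h0, mul_zero] at hpd; omega
      · exact h0
    -- every element of H is killed by multiplication by h
    have hkill : ∀ x ∈ H, (h : ZMod p) * x = 0 := by
      intro x hx
      have h1 : h • (⟨x, hx⟩ : H) = 0 := card_nsmul_eq_zero'
      have h2 : h • x = 0 := by
        have := congrArg Subtype.val h1
        rwa [AddSubmonoidClass.coe_nsmul] at this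
      rw [← nsmul_eq_mul]; exact h2
    -- the test vector
    set e : Fin (2 * k) → ZMod p := Pi.single i ((d : ℕ) : ZMod p) with he
    have hesum : ∀ y : Fin (2 * k) → ZMod p,
        (∑ j, a j * e j * y j) = a i * ((d : ℕ) : ZMod p) * y i := by
      intro y
      rw [Finset.sum_eq_single i]
      · simp [he]
      · intro j _ hj
        simp [he, Pi.single_eq_of_ne hj]
      · intro hni
        exact absurd (Finset.mem_univ i) hni
    have heM : e ∈ M := by
      rw [hmet]
      intro y hy
      rw [hesum]
      have hyi : y i ∈ H := ⟨y, hy, rfl⟩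
      have h0 : (h : ZMod p) * y i = 0 := hkill _ hyi
      calc a i * ((d : ℕ) : ZMod p) * y i
          = a i * (t0 : ZMod p) * ((h : ZMod p) * y i) := by
            rw [hd]; push_cast; ring
        _ = 0 := by rw [h0, mul_zero]
    -- self-pairing of e must vanish
    have hself : a i * ((d : ℕ) : ZMod p) * e i = 0 := by
      rw [← hesum e]
      exact (hmet e).mp heM e heM
    have hei : e i = ((d : ℕ) : ZMod p) := by simp [he]
    rw [hei] at hself
    have hsq : ((d * d : ℕ) : ZMod p) = 0 := by
      have hc := (ha i).mul_left_cancel (a := a i)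
        (b := ((d : ℕ) : ZMod p) * ((d : ℕ) : ZMod p)) (c := 0)
      push_cast
      apply hc
      rw [mul_zero, ← mul_assoc]
      exact hself
    have hpdvd : p ∣ d * d := (ZMod.natCast_eq_zero_iff _ _).mp hsq
    -- derive q * q ∣ p, contradicting squarefreeness
    obtain ⟨t, ht⟩ := hpdvd
    have hdq : d = q * t := by
      apply Nat.eq_of_mul_eq_mul_left hdpos
      calc d * d = q * d * t := by rw [ht, hpd]
        _ = d * (q * t) := by ring
    have hqq : q * q ∣ p := by
      rw [hpd, hdq]
      exact ⟨t, by ring⟩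
    have := hsf q hqq
    rw [Nat.isUnit_iff] at this
    exact hqprime.one_lt.ne' this
  refine ⟨hsurj, ?_⟩
  -- Part 2: averaging
  intro f i
  haveI : Fintype M := Fintype.ofFinite _
  haveI : Fintype ((M : Set (Fin (2 * k) → ZMod p)) : Type _) := Fintype.ofFinite _
  set g : M → ZMod p := fun x => (x : Fin (2 * k) → ZMod p) i with hg
  -- all fibers have the same cardinality
  have hfib : ∀ s : ZMod p,
      (Finset.univ.filter (fun x : M => g x = s)).card =
        (Finset.univ.filter (fun x : M => g x = 0)).card := by
    intro s
    obtain ⟨α, hα, hαi⟩ := hsurj i s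
    set x0 : M := ⟨α, hα⟩ with hx0
    apply Finset.card_bij (fun x _ => x - x0)
    · intro x hx
      simp only [Finset.mem_filter, Finset.mem_univ, true_and, hg] at hx ⊢
      have : ((x - x0 : M) : Fin (2 * k) → ZMod p) i
          = (x : Fin (2 * k) → ZMod p) i - (x0 : Fin (2 * k) → ZMod p) i := by
        push_cast; rfl
      rw [this, hx]
      simp [hx0, hαi]
    · intro x hx y hy hxy
      exact sub_left_injective hxy
    · intro y hy
      refine ⟨y + x0, ?_, by abel⟩
      simp only [Finset.mem_filter, Finset.mem_univ, true_and, hg] at hy ⊢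
      have : ((y + x0 : M) : Fin (2 * k) → ZMod p) i
          = (y : Fin (2 * k) → ZMod p) i + (x0 : Fin (2 * k) → ZMod p) i := by
        push_cast; rfl
      rw [this, hy]
      simp [hx0, hαi]
  set K := (Finset.univ.filter (fun x : M => g x = 0)).card with hK
  -- total cardinality is p * K
  have hcardM : Fintype.card M = p * K := by
    have h0 : (Finset.univ : Finset M).card
        = ∑ s : ZMod p, (Finset.univ.filter (fun x : M => g x = s)).card :=
      Finset.card_eq_sum_card_fiberwise (fun x _ => Finset.mem_univ (g x))
    rw [Finset.card_univ] at h0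
    rw [h0, Finset.sum_congr rfl (fun s _ => hfib s), Finset.sum_const, Finset.card_univ,
      ZMod.card, smul_eq_mul]
  -- convert the finsum to a sum over the subtype
  have h1 : (∑ᶠ α ∈ (M : Set (Fin (2 * k) → ZMod p)), f (α i)) = ∑ x : M, f (g x) := by
    rw [← finsum_set_coe_eq_finsum_mem]
    exact finsum_eq_sum_of_fintype _
  rw [h1]
  rw [← Finset.sum_fiberwise' (Finset.univ : Finset M) g f]
  have h2 : ∀ s : ZMod p,
      (∑ _x ∈ Finset.univ.filter (fun x : M => g x = s), f s) = (K : ℚ) * f s := by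
    intro s
    rw [Finset.sum_const, hfib s, nsmul_eq_mul]
  rw [Finset.sum_congr rfl (fun s _ => h2 s)]
  rw [← Finset.mul_sum]
  congr 1
  rw [Nat.card_eq_fintype_card, hcardM]
  push_cast
  rw [mul_comm, mul_div_assoc, div_self (by exact_mod_cast hp.ne' : (p : ℚ) ≠ 0), mul_one]
end
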